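/- arXiv:2311.15381 — 2 statements merged into one kernel-verified Lean document; each statement's English description precedes it below -/
import Mathlib

section
/- Let G be a transition graph with n ≥ 1 vertices, let ε > 0 be a real number, and suppose F(G) has the ε-separability property. Then for every natural number p with ε·p ≥ 6, the number of sets S ∈ F(G) with |S| = p is at most n^(3/ε) (real power). -/
structure TransitionGraph (V E U : Type*) where
  src : E → V
  tgt : E → V
  s : V
  t : V
  lab : E → Option U

namespace TransitionGraph

variable {V E U : Type*}

def IsSTPath (G : TransitionGraph V E U) (P : List E) : Prop :=
  List.Chain' (fun e f => G.tgt e = G.src f) P ∧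
    ((P = [] ∧ G.s = G.t) ∨
      ∃ h : P ≠ [], G.src (P.head h) = G.s ∧ G.tgt (P.getLast h) = G.t)

def labelSet [DecidableEq U] (G : TransitionGraph V E U) (P : List E) : Finset U :=
  (P.filterMap G.lab).toFinset

def labelFamily [DecidableEq U] (G : TransitionGraph V E U) : Set (Finset U) :=
  {S | ∃ P : List E, G.IsSTPath P ∧ G.labelSet P = S}

end TransitionGraph

/-- The `ε`-separability property for a family of finite sets. -/
def SepProperty {α : Type*} [DecidableEq α] (ε : ℝ) (F : Set (Finset α)) : Prop :=
  ∀ S₁ ∈ F, ∀ S₂ ∈ F, S₁ ≠ S₂ →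
    (6 : ℝ) ≤ ε * (max S₁.card S₂.card : ℕ) →
    ε * (max S₁.card S₂.card : ℕ) < ((symmDiff S₁ S₂).card : ℝ)

/-!
Choose a block size `m ≈ εp/3` and let `K = ⌊p/m⌋ ≤ 3/ε`. Along an `(s,t)`-path whose label set
has `p` elements, mark the first positions at which `m, 2m, …, Km` distinct labels have been seen;
the vertices at these marks form a fingerprint in `V^K`. If two such paths `A`, `B` share a
fingerprint, replacing in `B` the block between two consecutive marks by the corresponding block
of `A` yields an `(s,t)`-path whose label set differs from that of `B` in at most `2m ≤ εp`
labels, hence, by separability, not at all. By induction over the blocks every label of `A` is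
a label of `B`, and symmetrically, so the fingerprint determines the label set and there are at
most `n^K ≤ n^(3/ε)` of them.
-/

theorem Nat.exists_eq_of_le_of_le_succ {g : ℕ → ℕ} (h0 : g 0 = 0) (hg : ∀ n, g (n + 1) ≤ g n + 1)
    {v N : ℕ} (hv : v ≤ g N) : ∃ n, g n = v := by
  induction N with
  | zero => exact ⟨0, by omega⟩
  | succ N ih =>
    by_cases h : v ≤ g N
    · exact ih h
    · exact ⟨N + 1, by have := hg N; omega⟩

theorem SepProperty.eq_of_card_symmDiff_le {α : Type*} [DecidableEq α] {ε : ℝ}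
    {F : Set (Finset α)} (hF : SepProperty ε F) {S₁ S₂ : Finset α} (h₁ : S₁ ∈ F) (h₂ : S₂ ∈ F)
    (h6 : 6 ≤ ε * S₂.card) (hΔ : ((symmDiff S₁ S₂).card : ℝ) ≤ ε * S₂.card) : S₁ = S₂ := by
  by_contra hne
  have hε : 0 ≤ ε := by
    by_contra! hε
    nlinarith [(Nat.cast_nonneg S₂.card : (0 : ℝ) ≤ _)]
  have hmax : ε * S₂.card ≤ ε * (max S₁.card S₂.card : ℕ) :=
    mul_le_mul_of_nonneg_left (by exact_mod_cast le_max_right _ _) hε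
  linarith [hF S₁ h₁ S₂ h₂ hne (h6.trans hmax)]

namespace TransitionGraph

variable {V E U : Type*} (G : TransitionGraph V E U)

def IsWalk : V → V → List E → Prop
  | u, w, [] => u = w
  | u, w, e :: l => G.src e = u ∧ IsWalk (G.tgt e) w l

def walkEnd (u : V) (l : List E) : V := l.foldl (fun _ e => G.tgt e) u

variable {G}

theorem IsWalk.walkEnd_eq {u w : V} {l : List E} (h : G.IsWalk u w l) : G.walkEnd u l = w := by
  induction l generalizing u with
  | nil => exact h
  | cons e l ih => exact ih h.2

theorem isWalk_append {u w : V} {l₁ l₂ : List E} :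
    G.IsWalk u w (l₁ ++ l₂) ↔ G.IsWalk u (G.walkEnd u l₁) l₁ ∧ G.IsWalk (G.walkEnd u l₁) w l₂ := by
  induction l₁ generalizing u with
  | nil => simp [IsWalk, walkEnd]
  | cons e l ih => simp [IsWalk, walkEnd, ih, and_assoc]

theorem IsWalk.append {u v w : V} {l₁ l₂ : List E} (h₁ : G.IsWalk u v l₁) (h₂ : G.IsWalk v w l₂) :
    G.IsWalk u w (l₁ ++ l₂) := by
  rw [isWalk_append, h₁.walkEnd_eq]
  exact ⟨h₁, h₂⟩

theorem IsWalk.take {u w : V} {l : List E} (h : G.IsWalk u w l) (c : ℕ) :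
    G.IsWalk u (G.walkEnd u (l.take c)) (l.take c) := by
  rw [← l.take_append_drop c, isWalk_append] at h
  simpa using h.1

theorem IsWalk.drop {u w : V} {l : List E} (h : G.IsWalk u w l) (c : ℕ) :
    G.IsWalk (G.walkEnd u (l.take c)) w (l.drop c) := by
  rw [← l.take_append_drop c, isWalk_append] at h
  simpa using h.2

theorem IsWalk.splice {u w : V} {A B : List E} (hA : G.IsWalk u w A) (hB : G.IsWalk u w B)
    {a a' b b' : ℕ} (ha : a ≤ a') (hx : G.walkEnd u (A.take a) = G.walkEnd u (B.take b))
    (hy : G.walkEnd u (A.take a') = G.walkEnd u (B.take b')) :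
    G.IsWalk u w (B.take b ++ ((A.take a').drop a ++ B.drop b')) := by
  have hmid := (hA.take a').drop a
  rw [List.take_take, min_eq_left ha, hx, hy] at hmid
  exact (hB.take b).append (hmid.append (hB.drop b'))

theorem isWalk_cons_iff_isChain {u w : V} {e : E} {l : List E} :
    G.IsWalk u w (e :: l) ↔ G.src e = u ∧ List.IsChain (fun e f => G.tgt e = G.src f) (e :: l) ∧
      G.tgt ((e :: l).getLast (List.cons_ne_nil e l)) = w := by
  induction l generalizing u e with
  | nil => simp [IsWalk]
  | cons f l ih =>
    simp only [IsWalk] at ih ⊢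
    rw [ih, List.isChain_cons_cons, List.getLast_cons (List.cons_ne_nil f l),
      eq_comm (a := G.src f)]
    tauto

theorem isSTPath_iff_isWalk {P : List E} : G.IsSTPath P ↔ G.IsWalk G.s G.t P := by
  cases P with
  | nil =>
    simp only [IsSTPath, IsWalk]
    exact ⟨fun h => by simpa using h.2, fun h => ⟨.nil, .inl ⟨trivial, h⟩⟩⟩
  | cons e l => simp [IsSTPath, isWalk_cons_iff_isChain]; tauto

section Labels

variable [DecidableEq U] (G)

@[simp]
theorem labelSet_nil : G.labelSet ([] : List E) = ∅ := rfl

@[simp]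
theorem labelSet_append (l₁ l₂ : List E) :
    G.labelSet (l₁ ++ l₂) = G.labelSet l₁ ∪ G.labelSet l₂ := by
  simp [labelSet, List.filterMap_append]

theorem labelSet_subset_of_sublist {l₁ l₂ : List E} (h : l₁.Sublist l₂) :
    G.labelSet l₁ ⊆ G.labelSet l₂ := fun x hx => by
  simpa [labelSet] using (h.filterMap G.lab).subset (by simpa [labelSet] using hx)

theorem card_labelSet_le_length (l : List E) : (G.labelSet l).card ≤ l.length :=
  (List.toFinset_card_le _).trans (List.length_filterMap_le _ _)

theorem card_labelSet_take_succ_le (A : List E) (c : ℕ) :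
    (G.labelSet (A.take (c + 1))).card ≤ (G.labelSet (A.take c)).card + 1 := by
  rw [List.take_add_one, labelSet_append]
  refine (Finset.card_union_le _ _).trans (Nat.add_le_add_left ?_ _)
  exact (G.card_labelSet_le_length _).trans (by cases A[c]? <;> simp)

theorem card_labelSet_take_sdiff_le (A : List E) (c c' : ℕ) :
    (G.labelSet (A.take c') \ G.labelSet (A.take c)).card ≤
      (G.labelSet (A.take c')).card - (G.labelSet (A.take c)).card := by
  rcases le_total c c' with h | h
  · exact (Finset.card_sdiff_of_subset
      (G.labelSet_subset_of_sublist (List.take_sublist_take_left h))).le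
  · simp [Finset.sdiff_eq_empty_iff_subset.mpr
      (G.labelSet_subset_of_sublist (List.take_sublist_take_left h))]

open Classical in
noncomputable def checkpoint (A : List E) (v : ℕ) : ℕ :=
  if h : ∃ c, (G.labelSet (A.take c)).card = v then Nat.find h else 0

@[simp]
theorem checkpoint_zero (A : List E) : G.checkpoint A 0 = 0 := by
  classical
  have h : ∃ c, (G.labelSet (A.take c)).card = 0 := ⟨0, by simp⟩
  rw [checkpoint, dif_pos h, Nat.find_eq_zero]
  simp

theorem card_labelSet_take_checkpoint {A : List E} {v : ℕ} (hv : v ≤ (G.labelSet A).card) :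
    (G.labelSet (A.take (G.checkpoint A v))).card = v := by
  classical
  have h : ∃ c, (G.labelSet (A.take c)).card = v :=
    Nat.exists_eq_of_le_of_le_succ (by simp) (G.card_labelSet_take_succ_le A)
      (N := A.length) (by simpa using hv)
  rw [checkpoint, dif_pos h]
  exact Nat.find_spec h

noncomputable def fingerprint (m K : ℕ) (A : List E) : Fin K → V :=
  fun j => G.walkEnd G.s (A.take (G.checkpoint A ((j + 1) * m)))

end Labels

section Separability

variable [DecidableEq U] {ε : ℝ}

theorem labelSet_take_subset_of_splice (hsep : SepProperty ε G.labelFamily) {A B : List E}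
    (hA : G.IsWalk G.s G.t A) (hB : G.IsWalk G.s G.t B) {m : ℕ} (h6 : 6 ≤ ε * (G.labelSet B).card)
    (hm : 2 * (m : ℝ) ≤ ε * (G.labelSet B).card) {a a' b b' : ℕ}
    (hx : G.walkEnd G.s (A.take a) = G.walkEnd G.s (B.take b))
    (hy : G.walkEnd G.s (A.take a') = G.walkEnd G.s (B.take b'))
    (hA' : (G.labelSet (A.take a')).card ≤ (G.labelSet (A.take a)).card + m)
    (hB' : (G.labelSet (B.take b')).card ≤ (G.labelSet (B.take b)).card + m)
    (hsub : G.labelSet (A.take a) ⊆ G.labelSet B) :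
    G.labelSet (A.take a') ⊆ G.labelSet B := by
  rcases lt_or_ge a' a with ha | ha
  · exact (G.labelSet_subset_of_sublist (List.take_sublist_take_left ha.le)).trans hsub
  set mid := (A.take a').drop a
  set Y := B.take b ++ (mid ++ B.drop b')
  have hYmem : G.labelSet Y ∈ G.labelFamily :=
    ⟨Y, isSTPath_iff_isWalk.mpr (hA.splice hB ha hx hy), rfl⟩
  have hBmem : G.labelSet B ∈ G.labelFamily := ⟨B, isSTPath_iff_isWalk.mpr hB, rfl⟩
  have hAsplit : G.labelSet (A.take a') = G.labelSet (A.take a) ∪ G.labelSet mid := by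
    rw [← labelSet_append, ← min_eq_left ha, ← List.take_take, List.take_append_drop]
  have hBsplit : G.labelSet B = G.labelSet (B.take b') ∪ G.labelSet (B.drop b') := by
    rw [← labelSet_append, List.take_append_drop]
  have hBtake : G.labelSet (B.take b) ⊆ G.labelSet B :=
    G.labelSet_subset_of_sublist (List.take_sublist b B)
  have hBdrop : G.labelSet (B.drop b') ⊆ G.labelSet B :=
    G.labelSet_subset_of_sublist (List.drop_sublist b' B)
  have hYB : G.labelSet Y \ G.labelSet B ⊆ G.labelSet (A.take a') \ G.labelSet (A.take a) := by
    intro x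
    have := @hsub x; have := @hBtake x; have := @hBdrop x
    simp only [Y, labelSet_append, hAsplit, Finset.mem_sdiff, Finset.mem_union]
    tauto
  have hBY : G.labelSet B \ G.labelSet Y ⊆ G.labelSet (B.take b') \ G.labelSet (B.take b) := by
    intro x
    simp only [Y, labelSet_append, Finset.mem_sdiff, Finset.mem_union, hBsplit]
    tauto
  have hΔ : (symmDiff (G.labelSet Y) (G.labelSet B)).card ≤ 2 * m := by
    rw [symmDiff_def, Finset.sup_eq_union]
    have := (Finset.card_le_card hYB).trans (G.card_labelSet_take_sdiff_le A a a')
    have := (Finset.card_le_card hBY).trans (G.card_labelSet_take_sdiff_le B b b')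
    have := Finset.card_union_le (G.labelSet Y \ G.labelSet B) (G.labelSet B \ G.labelSet Y)
    omega
  have hYeq : G.labelSet Y = G.labelSet B :=
    hsep.eq_of_card_symmDiff_le hYmem hBmem h6 (le_trans (by exact_mod_cast hΔ) hm)
  have hmidY : G.labelSet mid ⊆ G.labelSet Y := fun x hx => by simp [Y, hx]
  rw [hAsplit]
  exact Finset.union_subset hsub (hYeq ▸ hmidY)

theorem labelSet_subset_of_fingerprint_eq (hsep : SepProperty ε G.labelFamily) {A B : List E}
    (hA : G.IsWalk G.s G.t A) (hB : G.IsWalk G.s G.t B) {m K p : ℕ}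
    (hcardA : (G.labelSet A).card = p) (hcardB : (G.labelSet B).card = p) (h6 : 6 ≤ ε * p)
    (hm : 2 * (m : ℝ) ≤ ε * p) (hKm : K * m ≤ p) (hpKm : p ≤ K * m + m)
    (h : G.fingerprint m K A = G.fingerprint m K B) : G.labelSet A ⊆ G.labelSet B := by
  have hvert : ∀ i ≤ K, G.walkEnd G.s (A.take (G.checkpoint A (i * m))) =
      G.walkEnd G.s (B.take (G.checkpoint B (i * m))) := by
    rintro (_ | i) hi
    · simp [walkEnd]
    · exact congrFun h ⟨i, hi⟩
  have hcard : ∀ X : List E, (G.labelSet X).card = p → ∀ i ≤ K,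
      (G.labelSet (X.take (G.checkpoint X (i * m)))).card = i * m := fun X hX i hi =>
    G.card_labelSet_take_checkpoint (hX ▸ (Nat.mul_le_mul_right m hi).trans hKm)
  rw [← hcardB] at h6 hm
  have hprefix : ∀ i ≤ K, G.labelSet (A.take (G.checkpoint A (i * m))) ⊆ G.labelSet B := by
    intro i
    induction i with
    | zero => simp
    | succ i ih =>
      intro hi
      refine G.labelSet_take_subset_of_splice hsep hA hB h6 hm (hvert i (by omega))
        (hvert (i + 1) hi) ?_ ?_ (ih (by omega))
      · rw [hcard A hcardA i (by omega), hcard A hcardA (i + 1) hi, add_mul, one_mul]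
      · rw [hcard B hcardB i (by omega), hcard B hcardB (i + 1) hi, add_mul, one_mul]
  have hend : ∀ X : List E, G.IsWalk G.s G.t X → G.walkEnd G.s (X.take X.length) = G.t :=
    fun X hX => by rw [List.take_length, hX.walkEnd_eq]
  simpa using G.labelSet_take_subset_of_splice hsep hA hB h6 hm (hvert K le_rfl)
    ((hend A hA).trans (hend B hB).symm) (by simp [hcard A hcardA K le_rfl, hcardA, hpKm])
    (by simp [hcard B hcardB K le_rfl, hcardB, hpKm]) (hprefix K le_rfl)

theorem labelSet_eq_of_fingerprint_eq (hsep : SepProperty ε G.labelFamily) {A B : List E}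
    (hA : G.IsWalk G.s G.t A) (hB : G.IsWalk G.s G.t B) {m K p : ℕ}
    (hcardA : (G.labelSet A).card = p) (hcardB : (G.labelSet B).card = p) (h6 : 6 ≤ ε * p)
    (hm : 2 * (m : ℝ) ≤ ε * p) (hKm : K * m ≤ p) (hpKm : p ≤ K * m + m)
    (h : G.fingerprint m K A = G.fingerprint m K B) : G.labelSet A = G.labelSet B :=
  (G.labelSet_subset_of_fingerprint_eq hsep hA hB hcardA hcardB h6 hm hKm hpKm h).antisymm
    (G.labelSet_subset_of_fingerprint_eq hsep hB hA hcardB hcardA h6 hm hKm hpKm h.symm)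

end Separability

end TransitionGraph

theorem exists_block_decomposition {ε : ℝ} (hε : 0 < ε) {p : ℕ} (hp : 6 ≤ ε * p) :
    ∃ m K : ℕ, 2 * (m : ℝ) ≤ ε * p ∧ K * m ≤ p ∧ p ≤ K * m + m ∧ (K : ℝ) ≤ 3 / ε := by
  have hpos : 0 < ε * p / 3 := by linarith
  set m := ⌈ε * p / 3⌉₊
  have hm_ge : ε * p / 3 ≤ m := Nat.le_ceil _
  have hm_lt : (m : ℝ) < ε * p / 3 + 1 := Nat.ceil_lt_add_one hpos.le
  have hm_pos : 0 < m := Nat.ceil_pos.mpr hpos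
  refine ⟨m, p / m, by linarith, Nat.div_mul_le_self p m, (Nat.lt_div_mul_add hm_pos).le, ?_⟩
  have hKm : ((p / m : ℕ) : ℝ) * m ≤ p := by exact_mod_cast Nat.div_mul_le_self p m
  rw [le_div_iff₀ hε]
  nlinarith

theorem stmt2_general {V E U : Type*} [Fintype V] [DecidableEq U]
    (G : TransitionGraph V E U) (ε : ℝ) (hε : 0 < ε)
    (hn : 1 ≤ Fintype.card V)
    (hsep : SepProperty ε G.labelFamily)
    (p : ℕ) (hp : (6 : ℝ) ≤ ε * p) :
    ({S ∈ G.labelFamily | S.card = p}.ncard : ℝ) ≤ (Fintype.card V : ℝ) ^ ((3 : ℝ) / ε) := by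
  obtain ⟨m, K, hm, hKm, hpKm, hK⟩ := exists_block_decomposition hε hp
  set T := {S ∈ G.labelFamily | S.card = p}
  have hpath : ∀ S ∈ T, ∃ A, G.IsWalk G.s G.t A ∧ G.labelSet A = S :=
    fun _ ⟨⟨A, hA, hAS⟩, _⟩ => ⟨A, TransitionGraph.isSTPath_iff_isWalk.mp hA, hAS⟩
  choose! path hwalk hlabel using hpath
  have hinj : Set.InjOn (fun S => G.fingerprint m K (path S)) T := by
    intro S₁ h₁ S₂ h₂ h
    rw [← hlabel S₁ h₁, ← hlabel S₂ h₂]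
    exact G.labelSet_eq_of_fingerprint_eq hsep (hwalk S₁ h₁) (hwalk S₂ h₂)
      ((hlabel S₁ h₁).symm ▸ h₁.2) ((hlabel S₂ h₂).symm ▸ h₂.2) hp hm hKm hpKm h
  have hcount : T.ncard ≤ Fintype.card V ^ K := by
    simpa [Set.ncard_univ] using
      Set.ncard_le_ncard_of_injOn _ (fun _ _ => Set.mem_univ _) hinj Set.finite_univ
  calc (T.ncard : ℝ) ≤ (Fintype.card V : ℝ) ^ (K : ℝ) := by
        rw [Real.rpow_natCast]; exact_mod_cast hcount
    _ ≤ (Fintype.card V : ℝ) ^ ((3 : ℝ) / ε) :=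
        Real.rpow_le_rpow_of_exponent_le (by exact_mod_cast hn) hK

theorem stmt2 {V E U : Type*} [Fintype V] [Fintype E] [Fintype U] [DecidableEq U]
    (G : TransitionGraph V E U) (ε : ℝ) (hε : 0 < ε)
    (hn : 1 ≤ Fintype.card V)
    (hsep : SepProperty ε G.labelFamily)
    (p : ℕ) (hp : (6 : ℝ) ≤ ε * p) :
    ({S ∈ G.labelFamily | S.card = p}.ncard : ℝ) ≤ (Fintype.card V : ℝ) ^ ((3 : ℝ) / ε) :=
  stmt2_general G ε hε hn hsep p hp
end

section
/- Let A be a trimmed NFA over the alphabet ℕ × ℕ with a finite state set. If the family {content(w) : w is a word accepted by A} is infinite, then some word accepted by A has content R containing a pair (i, j) such that either i does not occur as a coordinate of any pair of R other than (i, j), or j does not occur as a coordinate of any pair of R other than (i, j). -/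
/-- An NFA is trimmed if every state lies on an accepting run. -/
def Trimmed {α σ : Type*} (M : NFA α σ) : Prop :=
  ∀ q : σ, ∃ u v : List α,
    q ∈ M.evalFrom M.start u ∧ (M.evalFrom {q} v ∩ M.accept).Nonempty

private lemma evalFrom_mono {α σ : Type*} (M : NFA α σ) {S T : Set σ} (h : S ⊆ T)
    (w : List α) : M.evalFrom S w ⊆ M.evalFrom T w := by
  induction w generalizing S T with
  | nil => simpa [NFA.evalFrom] using h
  | cons a w ih =>
    refine ih ?_
    intro x hx
    rw [NFA.mem_stepSet] at hx ⊢
    obtain ⟨t, ht, hxt⟩ := hx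
    exact ⟨t, h ht, hxt⟩

private lemma evalFrom_empty {α σ : Type*} (M : NFA α σ) (w : List α) :
    M.evalFrom ∅ w = ∅ := by
  induction w with
  | nil => rfl
  | cons a w ih => simpa [NFA.evalFrom, M.stepSet_empty] using ih

theorem stmt13 {σ : Type*} [Fintype σ] (M : NFA (ℕ × ℕ) σ) (hT : Trimmed M)
    (h : {S : Finset (ℕ × ℕ) | ∃ w ∈ M.accepts, w.toFinset = S}.Infinite) :
    ∃ w ∈ M.accepts, ∃ p ∈ w.toFinset,
      ((∀ q ∈ w.toFinset, q ≠ p → q.1 ≠ p.1 ∧ q.2 ≠ p.1) ∨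
        (∀ q ∈ w.toFinset, q ≠ p → q.1 ≠ p.2 ∧ q.2 ≠ p.2)) := by
  classical
  -- choose witnesses of trimmedness
  choose u v hu hv using hT
  -- the finite set of coordinates appearing in the chosen words
  set coords : List (ℕ × ℕ) → Finset ℕ :=
    fun w => w.toFinset.image Prod.fst ∪ w.toFinset.image Prod.snd with hcoords
  set F : Finset ℕ := Finset.univ.sup (fun q : σ => coords (u q) ∪ coords (v q)) with hF
  set N : ℕ := F.sup id with hN
  have hFle : ∀ n ∈ F, n ≤ N := fun n hn => Finset.le_sup (f := id) hn
  -- the set of "live" letters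
  set L : Set (ℕ × ℕ) := {a | ∃ q q' : σ, q' ∈ M.step q a} with hL
  -- every letter of an accepted word is live
  have hlive : ∀ w ∈ M.accepts, ∀ a ∈ w, a ∈ L := by
    intro w hw a ha
    obtain ⟨s, t, rfl⟩ := List.append_of_mem ha
    rw [NFA.mem_accepts] at hw
    obtain ⟨x, _, hx⟩ := hw
    have : M.evalFrom M.start (s ++ a :: t) =
        M.evalFrom (M.stepSet (M.evalFrom M.start s) a) t := by
      simp [NFA.evalFrom, List.foldl_append]
    rw [this] at hx
    have hne : (M.stepSet (M.evalFrom M.start s) a).Nonempty := by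
      by_contra hc
      rw [Set.not_nonempty_iff_eq_empty] at hc
      rw [hc, evalFrom_empty] at hx
      exact hx
    obtain ⟨q', hq'⟩ := hne
    rw [NFA.mem_stepSet] at hq'
    obtain ⟨q, _, hq⟩ := hq'
    exact ⟨q, q', hq⟩
  -- L is infinite
  have hLinf : L.Infinite := by
    by_contra hc
    rw [Set.not_infinite] at hc
    refine h ?_
    refine Set.Finite.subset (Set.finite_coe_iff.mp ?_ :
      {S : Finset (ℕ × ℕ) | ↑S ⊆ L}.Finite) ?_
    · exact Set.finite_coe_iff.mpr (by
        have : {S : Finset (ℕ × ℕ) | ↑S ⊆ L} ⊆ ↑hc.toFinset.powerset := by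
          intro S hS
          simp only [Finset.mem_coe, Finset.mem_powerset]
          intro x hx
          exact hc.mem_toFinset.mpr (hS (Finset.mem_coe.mpr hx))
        exact Set.Finite.subset (Finset.finite_toSet _) this)
    · rintro S ⟨w, hw, rfl⟩
      intro a ha
      simp only [Finset.mem_coe, List.mem_toFinset] at ha
      exact hlive w hw a ha
  -- pick a live letter with a big coordinate
  have hbig : ∃ a ∈ L, N < a.1 ∨ N < a.2 := by
    by_contra hc
    push_neg at hc
    refine hLinf ?_
    refine Set.Finite.subset (Set.finite_Icc ((0 : ℕ), (0 : ℕ)) (N, N)) ?_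
    intro a ha
    obtain ⟨h1, h2⟩ := hc a ha
    simp [Prod.le_def, Nat.le_of_not_lt, h1, h2]
  obtain ⟨a, haL, hacoord⟩ := hbig
  obtain ⟨q, q', hstep⟩ := haL
  -- the accepted word
  refine ⟨u q ++ a :: v q', ?_, a, ?_, ?_⟩
  · rw [NFA.mem_accepts]
    obtain ⟨t, ht⟩ := hv q'
    refine ⟨t, ht.2, ?_⟩
    have heq : M.evalFrom M.start (u q ++ a :: v q') =
        M.evalFrom (M.stepSet (M.evalFrom M.start (u q)) a) (v q') := by
      simp [NFA.evalFrom, List.foldl_append]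
    rw [heq]
    refine evalFrom_mono M ?_ (v q') ht.1
    intro x hx
    simp only [Set.mem_singleton_iff] at hx
    subst hx
    rw [NFA.mem_stepSet]
    exact ⟨q, hu q, hstep⟩
  · simp
  · -- freshness
    have hmem : ∀ b ∈ (u q ++ a :: v q').toFinset, b ≠ a → b.1 ≤ N ∧ b.2 ≤ N := by
      intro b hb hba
      simp only [List.toFinset_append, List.toFinset_cons, Finset.mem_union,
        Finset.mem_insert, List.mem_toFinset] at hb
      have hc1 : ∀ (w : List (ℕ × ℕ)), b ∈ w → b.1 ∈ coords w ∧ b.2 ∈ coords w := by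
        intro w hbw
        exact ⟨Finset.mem_union_left _ (Finset.mem_image_of_mem _ (List.mem_toFinset.mpr hbw)),
          Finset.mem_union_right _ (Finset.mem_image_of_mem _ (List.mem_toFinset.mpr hbw))⟩
      have hbF : b.1 ∈ F ∧ b.2 ∈ F := by
        rcases hb with hb | hb | hb
        · obtain ⟨h1, h2⟩ := hc1 (u q) hb
          exact ⟨Finset.mem_sup.mpr ⟨q, Finset.mem_univ q, Finset.mem_union_left _ h1⟩,
            Finset.mem_sup.mpr ⟨q, Finset.mem_univ q, Finset.mem_union_left _ h2⟩⟩
        · exact absurd hb hba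
        · obtain ⟨h1, h2⟩ := hc1 (v q') hb
          exact ⟨Finset.mem_sup.mpr ⟨q', Finset.mem_univ q', Finset.mem_union_right _ h1⟩,
            Finset.mem_sup.mpr ⟨q', Finset.mem_univ q', Finset.mem_union_right _ h2⟩⟩
      exact ⟨hFle _ hbF.1, hFle _ hbF.2⟩
    rcases hacoord with hbig1 | hbig2
    · left
      intro b hb hba
      obtain ⟨h1, h2⟩ := hmem b hb hba
      exact ⟨by omega, by omega⟩
    · right
      intro b hb hba
      obtain ⟨h1, h2⟩ := hmem b hb hba
      exact ⟨by omega, by omega⟩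
end
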